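/- arXiv:2410.14576 — 5 statements merged into one kernel-verified Lean document; each statement's English description precedes it below -/
import Mathlib

section
/- Let n = p·m with p, m ≥ 2 and gcd(p,m) = 1. Write m = p·s + t with s ≥ 0 and 1 ≤ t ≤ p−1. If 1 ≤ r ≤ p−1 and p divides r·t + 1, then the residue class of (p−r)·m is an idempotent element of Z_n. -/
/-! `a = (p - r) m` is divisible by `m` and, since `m ≡ t (mod p)` and `r t ≡ -1 (mod p)`,
`a ≡ -r t ≡ 1 (mod p)`. Hence `p m ∣ (a - 1) a`, i.e. `a² = a` in `ZMod (p m)`. -/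

theorem ZMod.isIdempotentElem_intCast_of_dvd {p m : ℕ} {a : ℤ} (hp : (p : ℤ) ∣ a - 1)
    (hm : (m : ℤ) ∣ a) : IsIdempotentElem (a : ZMod (p * m)) := by
  have hdvd : ((p * m : ℕ) : ℤ) ∣ a * a - a := by
    rw [show a * a - a = (a - 1) * a by ring, Nat.cast_mul]
    exact mul_dvd_mul hp hm
  rw [IsIdempotentElem, ← sub_eq_zero, ← Int.cast_mul, ← Int.cast_sub,
    ZMod.intCast_zmod_eq_zero_iff_dvd]
  exact hdvd

theorem dvd_sub_mul_sub_one_of_dvd_mul_add_one {p m s t r : ℤ}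
    (hmst : m = p * s + t) (hdvd : p ∣ r * t + 1) :
    p ∣ (p - r) * m - 1 := by
  have hsplit : (p - r) * m - 1 = p * (m - r * s) - (r * t + 1) := by rw [hmst]; ring
  rw [hsplit]
  exact dvd_sub (dvd_mul_right p _) hdvd

theorem stmt_8_general (p m n s t r : ℕ) (hn : n = p * m) (hmst : m = p * s + t)
    (hr2 : r ≤ p - 1) (hdvd : p ∣ r * t + 1) :
    IsIdempotentElem ((((p - r) * m : ℕ) : ZMod n)) := by
  subst hn
  have hcast : (((p - r) * m : ℕ) : ℤ) = ((p : ℤ) - r) * m := by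
    push_cast [hr2.trans (Nat.sub_le p 1)]
    ring
  have hp : (p : ℤ) ∣ (((p - r) * m : ℕ) : ℤ) - 1 := by
    rw [hcast]
    exact dvd_sub_mul_sub_one_of_dvd_mul_add_one (s := s) (t := t)
      (by exact_mod_cast hmst) (by exact_mod_cast hdvd)
  have hm : (m : ℤ) ∣ (((p - r) * m : ℕ) : ℤ) := by
    exact_mod_cast dvd_mul_left m (p - r)
  simpa using ZMod.isIdempotentElem_intCast_of_dvd hp hm

theorem stmt_8 (p m n s t r : ℕ) (hp : 2 ≤ p) (hm : 2 ≤ m) (hcop : Nat.gcd p m = 1)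
    (hn : n = p * m) (hmst : m = p * s + t) (ht1 : 1 ≤ t) (ht2 : t ≤ p - 1)
    (hr1 : 1 ≤ r) (hr2 : r ≤ p - 1) (hdvd : p ∣ r * t + 1) :
    IsIdempotentElem ((((p - r) * m : ℕ) : ZMod n)) :=
  stmt_8_general p m n s t r hn hmst hr2 hdvd
end

section
/- Let p ≥ 2, s ≥ 0, 1 ≤ t ≤ p−1 and 1 ≤ r ≤ p−1 with p dividing r·t + 1, and suppose gcd(p, p·s + t) = 1. Set m₁ = p·s + (p − t). Then the residue class of r·m₁ is an idempotent element of Z_{p·m₁}. -/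
theorem ZMod.isIdempotentElem_natCast_of_dvd_of_modEq_one {p m e : ℕ} (hm : m ∣ e)
    (hp : e ≡ 1 [MOD p]) : IsIdempotentElem (e : ZMod (p * m)) := by
  have hdvd : ((p * m : ℕ) : ℤ) ∣ e * e - e := by
    have hp' : (p : ℤ) ∣ e - 1 := Nat.modEq_iff_dvd.mp hp.symm
    rw [Nat.cast_mul, show (e * e - e : ℤ) = (e - 1) * e by ring]
    exact mul_dvd_mul hp' (Int.natCast_dvd_natCast.mpr hm)
  have hcast := (ZMod.intCast_eq_intCast_iff_dvd_sub (e : ℤ) (e * e) (p * m)).mpr hdvd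
  rw [IsIdempotentElem, ← Nat.cast_mul]
  exact_mod_cast hcast.symm

theorem Nat.mul_add_sub_modEq_one {p t r : ℕ} (s : ℕ) (ht : t ≤ p) (hdvd : p ∣ r * t + 1) :
    r * (p * s + (p - t)) ≡ 1 [MOD p] := by
  rw [← ZMod.natCast_eq_natCast_iff]
  have h : ((r * t + 1 : ℕ) : ZMod p) = 0 := (ZMod.natCast_eq_zero_iff _ _).mpr hdvd
  push_cast [ht] at h ⊢
  rw [ZMod.natCast_self]
  linear_combination -h

theorem stmt_11_general (p s t r : ℕ) (ht2 : t ≤ p - 1) (hdvd : p ∣ r * t + 1) :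
    IsIdempotentElem (((r * (p * s + (p - t)) : ℕ) : ZMod (p * (p * s + (p - t))))) :=
  ZMod.isIdempotentElem_natCast_of_dvd_of_modEq_one (dvd_mul_left _ _)
    (Nat.mul_add_sub_modEq_one s (by omega) hdvd)

theorem stmt_11 (p s t r : ℕ) (hp : 2 ≤ p) (ht1 : 1 ≤ t) (ht2 : t ≤ p - 1)
    (hr1 : 1 ≤ r) (hr2 : r ≤ p - 1) (hdvd : p ∣ r * t + 1)
    (hcop : Nat.gcd p (p * s + t) = 1) :
    IsIdempotentElem (((r * (p * s + (p - t)) : ℕ) : ZMod (p * (p * s + (p - t))))) :=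
  stmt_11_general p s t r ht2 hdvd
end

section
/- Let p ≥ 2, s ≥ 0, 1 ≤ t ≤ p−1 and 1 ≤ r ≤ p−1 with p dividing r·t + 1, and suppose gcd(p, p·s + t) = 1. Set m₁ = p·s + (p − t). Then the residue class of (p − r)·m₁ + 1 is an idempotent element of Z_{p·m₁}. -/
/-! Write `N = k * m + 1`. Then `N ^ 2 - N = N * k * m`, which is divisible by `p * m` as soon as
`p ∣ N`; and `p ∣ N` because modulo `p` we have `N ≡ r * t + 1`. -/

theorem isIdempotentElem_natCast_of_dvd {p m k N : ℕ} (hN : N = k * m + 1) (hp : p ∣ N) :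
    IsIdempotentElem (N : ZMod (p * m)) := by
  have hzero : ((N * (k * m) : ℕ) : ZMod (p * m)) = 0 :=
    (ZMod.natCast_eq_zero_iff _ _).2 (mul_dvd_mul hp (dvd_mul_left m k))
  calc (N : ZMod (p * m)) * N = ((N * (k * m) : ℕ) : ZMod (p * m)) + N := by
        nth_rw 2 [hN]
        push_cast
        ring
    _ = N := by rw [hzero, zero_add]

-- Modulo `p`, the factors `p - r` and `p * s + (p - t)` are `-r` and `-t`.
theorem dvd_sub_mul_add_sub_add_one {p s t r : ℕ} (ht : t ≤ p) (hr : r ≤ p)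
    (hdvd : p ∣ r * t + 1) : p ∣ (p - r) * (p * s + (p - t)) + 1 := by
  rw [← ZMod.natCast_eq_zero_iff] at hdvd ⊢
  push_cast [Nat.cast_sub ht, Nat.cast_sub hr] at hdvd ⊢
  rw [ZMod.natCast_self]
  linear_combination hdvd

theorem stmt_12_general (p s t r : ℕ) (ht2 : t ≤ p - 1)
    (hr2 : r ≤ p - 1) (hdvd : p ∣ r * t + 1) :
    IsIdempotentElem ((((p - r) * (p * s + (p - t)) + 1 : ℕ) :
      ZMod (p * (p * s + (p - t))))) :=
  isIdempotentElem_natCast_of_dvd rfl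
    (dvd_sub_mul_add_sub_add_one (by omega) (by omega) hdvd)

theorem stmt_12 (p s t r : ℕ) (hp : 2 ≤ p) (ht1 : 1 ≤ t) (ht2 : t ≤ p - 1)
    (hr1 : 1 ≤ r) (hr2 : r ≤ p - 1) (hdvd : p ∣ r * t + 1)
    (hcop : Nat.gcd p (p * s + t) = 1) :
    IsIdempotentElem ((((p - r) * (p * s + (p - t)) + 1 : ℕ) :
      ZMod (p * (p * s + (p - t))))) :=
  stmt_12_general p s t r ht2 hr2 hdvd
end

section
/- Let n = p·m = p'·m' with p, m, p', m' ≥ 2 pairwise coprime factorizations (gcd(p,m) = gcd(p',m') = 1), and suppose p ≠ p', m ≠ m', p ≠ m', m ≠ p'. Let 1 ≤ r ≤ p−1 with p dividing r·m + 1 and 1 ≤ r' ≤ p'−1 with p' dividing r'·m' + 1. Then r·m + 1 ≢ r'·m' + 1 (mod n). -/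
/-! Both `r * m + 1` and `r' * m' + 1` lie below `n`, so the congruence would be an equality.
Then `p` divides `r' * m' + 1`, hence is coprime to `m'`, and `p ∣ n = p' * m'` forces `p ∣ p'`;
symmetrically `p' ∣ p`, contradicting `p ≠ p'`. -/

theorem Nat.mul_add_one_lt_mul {r p m : ℕ} (hr : r < p) (hm : 2 ≤ m) : r * m + 1 < p * m := by
  nlinarith

theorem Nat.coprime_of_dvd_mul_add_one {p r m : ℕ} (h : p ∣ r * m + 1) : Nat.Coprime p m :=
  Nat.Coprime.coprime_dvd_left h ((Nat.coprime_mul_right_add_left 1 m r).mpr (Nat.coprime_one_left m))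

theorem Nat.eq_of_mul_eq_mul_of_coprime {p m p' m' : ℕ} (h : p * m = p' * m')
    (hpm' : Nat.Coprime p m') (hp'm : Nat.Coprime p' m) : p = p' :=
  Nat.dvd_antisymm (hpm'.dvd_of_dvd_mul_right (h ▸ dvd_mul_right p m))
    (hp'm.dvd_of_dvd_mul_right (h ▸ dvd_mul_right p' m'))

theorem stmt_17_general (n p m p' m' r r' : ℕ) (hp : 2 ≤ p) (hm : 2 ≤ m) (hp' : 2 ≤ p')
    (hm' : 2 ≤ m')
    (hn : n = p * m) (hn' : n = p' * m')
    (h1 : p ≠ p')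
    (hr2 : r ≤ p - 1) (hdvd : p ∣ r * m + 1)
    (hr2' : r' ≤ p' - 1) (hdvd' : p' ∣ r' * m' + 1) :
    ¬ (r * m + 1 ≡ r' * m' + 1 [MOD n]) := by
  intro h
  have hlt : r * m + 1 < n := hn ▸ Nat.mul_add_one_lt_mul (by omega) hm
  have hlt' : r' * m' + 1 < n := hn' ▸ Nat.mul_add_one_lt_mul (by omega) hm'
  have heq : r * m + 1 = r' * m' + 1 := h.eq_of_lt_of_lt hlt hlt'
  exact h1 <| Nat.eq_of_mul_eq_mul_of_coprime (hn ▸ hn')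
    (Nat.coprime_of_dvd_mul_add_one (heq ▸ hdvd)) (Nat.coprime_of_dvd_mul_add_one (heq ▸ hdvd'))

theorem stmt_17 (n p m p' m' r r' : ℕ) (hp : 2 ≤ p) (hm : 2 ≤ m) (hp' : 2 ≤ p')
    (hm' : 2 ≤ m') (hcop : Nat.gcd p m = 1) (hcop' : Nat.gcd p' m' = 1)
    (hn : n = p * m) (hn' : n = p' * m')
    (h1 : p ≠ p') (h2 : m ≠ m') (h3 : p ≠ m') (h4 : m ≠ p')
    (hr1 : 1 ≤ r) (hr2 : r ≤ p - 1) (hdvd : p ∣ r * m + 1)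
    (hr1' : 1 ≤ r') (hr2' : r' ≤ p' - 1) (hdvd' : p' ∣ r' * m' + 1) :
    ¬ (r * m + 1 ≡ r' * m' + 1 [MOD n]) :=
  stmt_17_general n p m p' m' r r' hp hm hp' hm' hn hn' h1 hr2 hdvd hr2' hdvd'
end

section
/- Let n = p·m = p'·m' with p, m, p', m' ≥ 2, gcd(p,m) = gcd(p',m') = 1, and suppose p ≠ p', m ≠ m', p ≠ m', m ≠ p'. Let 1 ≤ r ≤ p−1 with p dividing r·m + 1 and 1 ≤ r' ≤ p'−1 with p' dividing r'·m' + 1. Then r·m + 1 ≢ (p'−r')·m' (mod n). -/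
/-!
Both sides of the congruence are smaller than `n`, so they are equal; call the common value
`L = r m + 1 = (p' - r') m'`. Then `p, m' ∣ L` while `m, p' ∣ L - 1`, so `p ⊥ p'` and `m ⊥ m'`.
From `p m = p' m'` it follows that `p' ∣ m` and `m ∣ p'`, i.e. `m = p'`.
-/

namespace Nat

theorem coprime_of_dvd_add_one_of_dvd {a b k : ℕ} (ha : a ∣ k + 1) (hb : b ∣ k) : Coprime a b :=
  (coprime_self_add_left.mpr (coprime_one_left k)).coprime_dvd_left ha |>.coprime_dvd_right hb

theorem eq_of_mul_eq_mul_of_coprime_s18 {p m p' m' : ℕ} (h : p * m = p' * m')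
    (hp : Coprime p p') (hm : Coprime m m') : m = p' :=
  dvd_antisymm (hm.dvd_of_dvd_mul_right (h ▸ dvd_mul_left m p))
    (hp.symm.dvd_of_dvd_mul_left (h ▸ dvd_mul_right p' m'))

theorem mul_add_one_lt_mul_s18 {r p m : ℕ} (hr : r < p) (hm : 2 ≤ m) : r * m + 1 < p * m :=
  calc r * m + 1 < (r + 1) * m := by rw [add_one_mul]; omega
    _ ≤ p * m := mul_le_mul_right m hr

theorem sub_mul_lt_mul {r p m : ℕ} (hr : 0 < r) (hrp : r ≤ p) (hm : 0 < m) :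
    (p - r) * m < p * m :=
  mul_lt_mul_of_pos_right (sub_lt (by omega) hr) hm

end Nat

theorem stmt_18_general (n p m p' m' r r' : ℕ) (hm : 2 ≤ m) (hm' : 2 ≤ m')
    (hn : n = p * m) (hn' : n = p' * m') (h4 : m ≠ p')
    (hr1 : 1 ≤ r) (hr2 : r ≤ p - 1) (hdvd : p ∣ r * m + 1)
    (hr1' : 1 ≤ r') (hr2' : r' ≤ p' - 1) (hdvd' : p' ∣ r' * m' + 1) :
    ¬ (r * m + 1 ≡ (p' - r') * m' [MOD n]) := by
  intro hcong
  have hlt : r * m + 1 < n := hn ▸ Nat.mul_add_one_lt_mul_s18 (by omega) hm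
  have hlt' : (p' - r') * m' < n := hn' ▸ Nat.sub_mul_lt_mul hr1' (by omega) (by omega)
  have heq : r * m + 1 = (p' - r') * m' := hcong.eq_of_lt_of_lt hlt hlt'
  have hp'_dvd : p' ∣ r * m := by
    have hsum : r * m + (r' * m' + 1) = p' * m' := by
      rw [add_comm (r' * m'), ← add_assoc, heq, ← add_mul, Nat.sub_add_cancel (by omega)]
    exact (Nat.dvd_add_left hdvd').mp (hsum ▸ dvd_mul_right p' m')
  have hm'_dvd : m' ∣ r * m + 1 := heq ▸ dvd_mul_left m' _
  exact h4 <| Nat.eq_of_mul_eq_mul_of_coprime_s18 (hn.symm.trans hn')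
    (Nat.coprime_of_dvd_add_one_of_dvd hdvd hp'_dvd)
    (Nat.coprime_of_dvd_add_one_of_dvd hm'_dvd (dvd_mul_left m r)).symm

theorem stmt_18 (n p m p' m' r r' : ℕ) (hp : 2 ≤ p) (hm : 2 ≤ m) (hp' : 2 ≤ p')
    (hm' : 2 ≤ m') (hcop : Nat.gcd p m = 1) (hcop' : Nat.gcd p' m' = 1)
    (hn : n = p * m) (hn' : n = p' * m')
    (h1 : p ≠ p') (h2 : m ≠ m') (h3 : p ≠ m') (h4 : m ≠ p')
    (hr1 : 1 ≤ r) (hr2 : r ≤ p - 1) (hdvd : p ∣ r * m + 1)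
    (hr1' : 1 ≤ r') (hr2' : r' ≤ p' - 1) (hdvd' : p' ∣ r' * m' + 1) :
    ¬ (r * m + 1 ≡ (p' - r') * m' [MOD n]) :=
  stmt_18_general n p m p' m' r r' hm hm' hn hn' h4 hr1 hr2 hdvd hr1' hr2' hdvd'
end
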